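/- arXiv:2405.11615 — 2 statements merged into one kernel-verified Lean document; each statement's English description precedes it below -/
import Mathlib

section
/- For square-integrable vector-valued functions Z : [a,b] → ℝ^m with zero componentwise integral and W : [c,d] → ℝⁿ with zero componentwise integral, and Z̄ ∈ ℝ^{m×n}, the squared L²-norm of s_int(x,y) = Z(x)ᵀ Z̄ W(y) equals vec(Z̄)ᵀ (M_W ⊗ M_Z) vec(Z̄), where M_Z = ∫_a^b Z(x) Z(x)ᵀ dx and M_W = ∫_c^d W(y) W(y)ᵀ dy and ⊗ is the Kronecker product. -/
/-!
Pointwise, `(zᵀ A w)²` is the quadratic form of `vec A` under `(w wᵀ) ⊗ (z zᵀ)`, by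
`(B ⊗ A) vec X = vec (A X Bᵀ)` and `vec A ⬝ vec B = tr (Aᵀ B)`. Integrating entrywise commutes with
the quadratic form, and by Fubini the entrywise integral of `(w wᵀ)(y) ⊗ (z zᵀ)(x)` over the
product measure is `M_W ⊗ M_Z`.
-/

open MeasureTheory Matrix Kronecker

namespace Matrix

variable {ι κ R : Type*} [Fintype ι] [Fintype κ] [CommSemiring R]

theorem dotProduct_mulVec_eq_sum_sum (A : Matrix ι κ R) (z : ι → R) (w : κ → R) :
    z ⬝ᵥ (A *ᵥ w) = ∑ i, ∑ j, z i * A i j * w j := by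
  simp only [dotProduct, mulVec, Finset.mul_sum, mul_assoc]

theorem sq_dotProduct_mulVec (A : Matrix ι κ R) (z : ι → R) (w : κ → R) :
    (z ⬝ᵥ (A *ᵥ w)) ^ 2 = vec A ⬝ᵥ ((vecMulVec w w ⊗ₖ vecMulVec z z) *ᵥ vec A) := by
  rw [kronecker_mulVec_vec, vec_dotProduct_vec, transpose_vecMulVec, vecMulVec_mul,
    vecMulVec_mul_vecMulVec, mul_vecMulVec, trace_vecMulVec, dotProduct_smul, smul_eq_mul,
    mulVec_transpose, dotProduct_mulVec, sq]

end Matrix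

section

variable {α β 𝕜 ι κ : Type*} [MeasurableSpace α] [MeasurableSpace β] [RCLike 𝕜]

noncomputable def integralEntrywise (μ : Measure α) (K : α → Matrix ι κ 𝕜) : Matrix ι κ 𝕜 :=
  of fun i j => ∫ x, K x i j ∂μ

theorem integral_dotProduct_mulVec [Fintype ι] [Fintype κ] {μ : Measure α}
    {K : α → Matrix ι κ 𝕜} (hK : ∀ i j, Integrable (fun x => K x i j) μ) (u : ι → 𝕜)
    (v : κ → 𝕜) :
    ∫ x, u ⬝ᵥ (K x *ᵥ v) ∂μ = u ⬝ᵥ (integralEntrywise μ K *ᵥ v) := by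
  simp only [dotProduct, mulVec, integralEntrywise, of_apply]
  rw [integral_finsetSum _ fun i _ =>
    (integrable_finsetSum _ fun j _ => (hK i j).mul_const (v j)).const_mul (u i)]
  refine Finset.sum_congr rfl fun i _ => ?_
  rw [integral_const_mul, integral_finsetSum _ fun j _ => (hK i j).mul_const (v j)]
  simp only [integral_mul_const]

theorem integralEntrywise_kroneckerMap_prod (μ : Measure α) (ν : Measure β) [SFinite μ]
    [SFinite ν] (M : α → Matrix ι ι 𝕜) (N : β → Matrix κ κ 𝕜) :
    integralEntrywise (μ.prod ν) (fun p => N p.2 ⊗ₖ M p.1) =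
      integralEntrywise ν N ⊗ₖ integralEntrywise μ M := by
  ext ⟨j, i⟩ ⟨j', i'⟩
  simpa only [integralEntrywise, kroneckerMap_apply, of_apply, mul_comm] using
    integral_prod_mul (μ := μ) (ν := ν) (fun x => M x i i') (fun y => N y j j')

theorem integral_prod_sq_dotProduct_mulVec [Fintype ι] [Fintype κ] (μ : Measure α)
    (ν : Measure β) [SFinite μ] [SFinite ν] {z : α → ι → 𝕜} {w : β → κ → 𝕜}
    (hz : ∀ i, MemLp (z · i) 2 μ) (hw : ∀ j, MemLp (w · j) 2 ν) (A : Matrix ι κ 𝕜) :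
    ∫ p, (z p.1 ⬝ᵥ (A *ᵥ w p.2)) ^ 2 ∂μ.prod ν =
      vec A ⬝ᵥ ((integralEntrywise ν (fun y => vecMulVec (w y) (w y)) ⊗ₖ
        integralEntrywise μ (fun x => vecMulVec (z x) (z x))) *ᵥ vec A) := by
  simp_rw [sq_dotProduct_mulVec]
  rw [integral_dotProduct_mulVec, ← integralEntrywise_kroneckerMap_prod]
  rintro ⟨j, i⟩ ⟨j', i'⟩
  simpa only [kroneckerMap_apply, vecMulVec_apply, Pi.mul_apply, mul_comm] using
    ((hz i).integrable_mul (hz i')).mul_prod ((hw j).integrable_mul (hw j'))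

end

theorem zb_interactive_norm_general (a b c d : ℝ) (hab : a < b) (hcd : c < d)
    (m n : ℕ) (Z : Fin m → ℝ → ℝ) (W : Fin n → ℝ → ℝ)
    (Zbar : Matrix (Fin m) (Fin n) ℝ)
    (hZL2 : ∀ i, MemLp (Z i) 2 (volume.restrict (Set.Icc a b)))
    (hWL2 : ∀ j, MemLp (W j) 2 (volume.restrict (Set.Icc c d))) :
    ∫ p in Set.Icc a b ×ˢ Set.Icc c d,
      (∑ i, ∑ j, Z i p.1 * Zbar i j * W j p.2) ^ 2 =
    (fun q : Fin n × Fin m => Zbar q.2 q.1) ⬝ᵥ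
      (((Matrix.of fun j j' : Fin n => ∫ y in c..d, W j y * W j' y) ⊗ₖ
        (Matrix.of fun i i' : Fin m => ∫ x in a..b, Z i x * Z i' x)).mulVec
          (fun q : Fin n × Fin m => Zbar q.2 q.1)) := by
  have gram_eq {k : ℕ} (f : Fin k → ℝ → ℝ) {s t : ℝ} (hst : s ≤ t) :
      (of fun i i' => ∫ x in s..t, f i x * f i' x) =
        integralEntrywise (volume.restrict (Set.Icc s t)) fun x => vecMulVec (f · x) (f · x) := by
    ext i i'
    rw [of_apply, intervalIntegral.integral_of_le hst, ← integral_Icc_eq_integral_Ioc]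
    rfl
  simp_rw [← dotProduct_mulVec_eq_sum_sum]
  rw [Measure.volume_eq_prod, ← Measure.prod_restrict,
    integral_prod_sq_dotProduct_mulVec _ _ hZL2 hWL2, gram_eq W hcd.le, gram_eq Z hab.le]
  rfl

/-- Theorem A.2 (zb_norm): the squared `L²`-norm of the interactive part
`s_int(x,y) = Z(x)ᵀ Z̄ W(y)` equals `vec(Z̄)ᵀ (M_W ⊗ M_Z) vec(Z̄)` with the Gram
matrices `M_Z = ∫ Z Zᵀ` and `M_W = ∫ W Wᵀ`. -/
theorem zb_interactive_norm (a b c d : ℝ) (hab : a < b) (hcd : c < d)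
    (m n : ℕ) (Z : Fin m → ℝ → ℝ) (W : Fin n → ℝ → ℝ)
    (Zbar : Matrix (Fin m) (Fin n) ℝ)
    (hZL2 : ∀ i, MemLp (Z i) 2 (volume.restrict (Set.Icc a b)))
    (hWL2 : ∀ j, MemLp (W j) 2 (volume.restrict (Set.Icc c d)))
    (hZ0 : ∀ i, ∫ x in a..b, Z i x = 0)
    (hW0 : ∀ j, ∫ y in c..d, W j y = 0) :
    ∫ p in Set.Icc a b ×ˢ Set.Icc c d,
      (∑ i, ∑ j, Z i p.1 * Zbar i j * W j p.2) ^ 2 =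
    (fun q : Fin n × Fin m => Zbar q.2 q.1) ⬝ᵥ
      (((Matrix.of fun j j' : Fin n => ∫ y in c..d, W j y * W j' y) ⊗ₖ
        (Matrix.of fun i i' : Fin m => ∫ x in a..b, Z i x * Z i' x)).mulVec
          (fun q : Fin n × Fin m => Zbar q.2 q.1)) :=
  zb_interactive_norm_general a b c d hab hcd m n Z W Zbar hZL2 hWL2
end

section
/- For h, k ∈ L²(Ω) on Ω = [a,b] × [c,d] both with zero integral, the decomposition h = h₁ + h₂ + h_int (into the two clr marginals and the interactive part) is an orthogonal decomposition: ⟨h₁, h₂⟩ = ⟨h₁, h_int⟩ = ⟨h₂, h_int⟩ = 0 in L²(Ω), where h₁(x,y) = (1/(d−c)) ∫_c^d h(x,t) dt, h₂(x,y) = (1/(b−a)) ∫_a^b h(s,y) ds, and h_int = h − h₁ − h₂. -/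
/-!
The clr marginals are fibre averages, `h₁ (x, y) = ⨍ t in [c,d], h (x, t)` and
`h₂ (x, y) = ⨍ s in [a,b], h (s, y)`, and Jensen's inequality puts them in `L²`. Since `h - h₁` has
zero average along every fibre `{x} × [c,d]`, Fubini makes it orthogonal to every square-integrable
function of `x` alone, in particular to `h₁`; symmetrically `h - h₂ ⊥ h₂`. The product `h₁ h₂`
separates variables, so `⟨h₁, h₂⟩` factors through `∫ h₁ = ∫ h / (d - c) = 0`. Writing
`h_int = (h - h₁) - h₂ = (h - h₂) - h₁` gives the three orthogonality relations.
-/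

open Set

namespace MeasureTheory

variable {α β : Type*} [MeasurableSpace α] [MeasurableSpace β] {μ : Measure α} {ν : Measure β}

theorem sq_average_le [IsFiniteMeasure ν] [NeZero ν] {f : β → ℝ} (hf : Integrable f ν)
    (hf2 : Integrable (fun y ↦ f y ^ 2) ν) : (⨍ y, f y ∂ν) ^ 2 ≤ ⨍ y, f y ^ 2 ∂ν :=
  even_two.convexOn_pow.map_average_le (continuous_pow 2).continuousOn isClosed_univ
    (by simp) hf hf2

theorem Integrable.average_prod_left [SFinite ν] {f : α × β → ℝ}
    (hf : Integrable f (μ.prod ν)) : Integrable (fun x ↦ ⨍ y, f (x, y) ∂ν) μ := by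
  simpa only [average_eq, smul_eq_mul] using hf.integral_prod_left.const_mul (ν.real univ)⁻¹

theorem MemLp.average_prod_left [IsFiniteMeasure μ] [IsFiniteMeasure ν] [NeZero ν]
    {f : α × β → ℝ} (hf : MemLp f 2 (μ.prod ν)) : MemLp (fun x ↦ ⨍ y, f (x, y) ∂ν) 2 μ := by
  have hf1 : Integrable f (μ.prod ν) := hf.integrable one_le_two
  have hf2 : Integrable (fun p ↦ f p ^ 2) (μ.prod ν) := hf.integrable_sq
  have hmeas := hf1.average_prod_left.aestronglyMeasurable
  refine (memLp_two_iff_integrable_sq hmeas).2 <| hf2.average_prod_left.mono' (hmeas.pow 2) ?_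
  filter_upwards [hf1.prod_right_ae, hf2.prod_right_ae] with x hx1 hx2
  rw [Real.norm_of_nonneg (sq_nonneg _)]
  exact sq_average_le hx1 hx2

theorem integral_comp_fst_mul [SFinite μ] [SFinite ν] {g : α → ℝ} {f : α × β → ℝ}
    (hgf : Integrable (fun p ↦ g p.1 * f p) (μ.prod ν)) :
    ∫ p, g p.1 * f p ∂(μ.prod ν) = ∫ x, g x * ∫ y, f (x, y) ∂ν ∂μ := by
  simp only [integral_prod _ hgf, integral_const_mul]

theorem integral_comp_fst_mul_sub_average [IsFiniteMeasure μ] [IsFiniteMeasure ν] [NeZero ν]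
    {g : α → ℝ} {f : α × β → ℝ} (hg : MemLp g 2 μ) (hf : MemLp f 2 (μ.prod ν)) :
    ∫ p, g p.1 * (f p - ⨍ y, f (p.1, y) ∂ν) ∂(μ.prod ν) = 0 := by
  have hint : Integrable (fun p ↦ g p.1 * (f p - ⨍ y, f (p.1, y) ∂ν)) (μ.prod ν) :=
    (hg.comp_fst ν).integrable_mul (hf.sub (hf.average_prod_left.comp_fst ν))
  simp only [integral_comp_fst_mul hint, integral_sub_average, mul_zero, integral_zero]

theorem integral_comp_snd_mul_sub_average [IsFiniteMeasure μ] [NeZero μ] [IsFiniteMeasure ν]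
    {g : β → ℝ} {f : α × β → ℝ} (hg : MemLp g 2 ν) (hf : MemLp f 2 (μ.prod ν)) :
    ∫ p, g p.2 * (f p - ⨍ x, f (x, p.2) ∂μ) ∂(μ.prod ν) = 0 := by
  rw [← integral_prod_swap]
  exact integral_comp_fst_mul_sub_average hg
    (hf.comp_measurePreserving Measure.measurePreserving_swap)

theorem integral_average_prod_left [SFinite μ] [SFinite ν] {f : α × β → ℝ}
    (hf : Integrable f (μ.prod ν)) :
    ∫ x, ⨍ y, f (x, y) ∂ν ∂μ = (ν.real univ)⁻¹ * ∫ p, f p ∂(μ.prod ν) := by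
  simp only [average_eq, smul_eq_mul, integral_const_mul, integral_prod f hf]

theorem integral_mul_sub {u v w : α → ℝ} (hu : MemLp u 2 μ) (hv : MemLp v 2 μ)
    (hw : MemLp w 2 μ) :
    ∫ x, u x * (v x - w x) ∂μ = ∫ x, u x * v x ∂μ - ∫ x, u x * w x ∂μ := by
  simp only [mul_sub]
  exact integral_sub (hu.integrable_mul hv) (hu.integrable_mul hw)

theorem integral_average_mul_average_eq_zero [SFinite μ] [SFinite ν] {f : α × β → ℝ}
    (hf : Integrable f (μ.prod ν)) (h0 : ∫ p, f p ∂(μ.prod ν) = 0) :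
    ∫ p, (⨍ y, f (p.1, y) ∂ν) * (⨍ x, f (x, p.2) ∂μ) ∂(μ.prod ν) = 0 := by
  rw [integral_prod_mul (fun x ↦ ⨍ y, f (x, y) ∂ν) (fun y ↦ ⨍ x, f (x, y) ∂μ),
    integral_average_prod_left hf, h0, mul_zero, zero_mul]

theorem orthogonal_average_decomposition [IsFiniteMeasure μ] [NeZero μ] [IsFiniteMeasure ν]
    [NeZero ν] {f : α × β → ℝ} (hf : MemLp f 2 (μ.prod ν)) (h0 : ∫ p, f p ∂(μ.prod ν) = 0) :
    (∫ p, (⨍ y, f (p.1, y) ∂ν) * (⨍ x, f (x, p.2) ∂μ) ∂(μ.prod ν) = 0) ∧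
    (∫ p, (⨍ y, f (p.1, y) ∂ν) * (f p - ⨍ y, f (p.1, y) ∂ν - ⨍ x, f (x, p.2) ∂μ)
      ∂(μ.prod ν) = 0) ∧
    (∫ p, (⨍ x, f (x, p.2) ∂μ) * (f p - ⨍ y, f (p.1, y) ∂ν - ⨍ x, f (x, p.2) ∂μ)
      ∂(μ.prod ν) = 0) := by
  have hf₁ : MemLp (fun x ↦ ⨍ y, f (x, y) ∂ν) 2 μ := hf.average_prod_left
  have hf₂ : MemLp (fun y ↦ ⨍ x, f (x, y) ∂μ) 2 ν :=
    (hf.comp_measurePreserving Measure.measurePreserving_swap).average_prod_left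
  have h₁ : MemLp (fun p : α × β ↦ ⨍ y, f (p.1, y) ∂ν) 2 (μ.prod ν) := hf₁.comp_fst ν
  have h₂ : MemLp (fun p : α × β ↦ ⨍ x, f (x, p.2) ∂μ) 2 (μ.prod ν) := hf₂.comp_snd μ
  have hcross := integral_average_mul_average_eq_zero (hf.integrable one_le_two) h0
  refine ⟨hcross, ?_, ?_⟩
  · rw [integral_mul_sub (v := fun p ↦ f p - ⨍ y, f (p.1, y) ∂ν) h₁ (hf.sub h₁) h₂,
      integral_comp_fst_mul_sub_average hf₁ hf, hcross, sub_zero]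
  · simp_rw [sub_right_comm (f _)]
    rw [integral_mul_sub (v := fun p ↦ f p - ⨍ x, f (x, p.2) ∂μ) h₂ (hf.sub h₂) h₁,
      integral_comp_snd_mul_sub_average hf₂ hf]
    simp_rw [mul_comm (⨍ x, f (x, _) ∂μ)]
    rw [hcross, sub_zero]

theorem setAverage_Icc_eq {a b : ℝ} (hab : a ≤ b) (f : ℝ → ℝ) :
    ⨍ x in Icc a b, f x = (1 / (b - a)) * ∫ x in a..b, f x := by
  rw [setAverage_eq, Real.volume_real_Icc_of_le hab, integral_Icc_eq_integral_Ioc,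
    ← intervalIntegral.integral_of_le hab, smul_eq_mul, one_div]

end MeasureTheory

open MeasureTheory

/-- The decomposition `h = h₁ + h₂ + h_int` of an `L²` function with zero integral
on `Ω = [a,b] × [c,d]` into its two clr marginals and its interactive part is an
orthogonal decomposition in `L²(Ω)`. -/
theorem clr_decomposition_orthogonal (a b c d : ℝ) (hab : a < b) (hcd : c < d)
    (h : ℝ × ℝ → ℝ)
    (hL2 : MemLp h 2 (volume.restrict (Set.Icc a b ×ˢ Set.Icc c d)))
    (hzero : ∫ p in Set.Icc a b ×ˢ Set.Icc c d, h p = 0) :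
    (∫ p in Set.Icc a b ×ˢ Set.Icc c d,
        ((1 / (d - c)) * ∫ t in c..d, h (p.1, t)) *
        ((1 / (b - a)) * ∫ s in a..b, h (s, p.2)) = 0) ∧
    (∫ p in Set.Icc a b ×ˢ Set.Icc c d,
        ((1 / (d - c)) * ∫ t in c..d, h (p.1, t)) *
        (h p - ((1 / (d - c)) * ∫ t in c..d, h (p.1, t))
             - ((1 / (b - a)) * ∫ s in a..b, h (s, p.2))) = 0) ∧
    (∫ p in Set.Icc a b ×ˢ Set.Icc c d,
        ((1 / (b - a)) * ∫ s in a..b, h (s, p.2)) *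
        (h p - ((1 / (d - c)) * ∫ t in c..d, h (p.1, t))
             - ((1 / (b - a)) * ∫ s in a..b, h (s, p.2))) = 0) := by
  have : NeZero (volume.restrict (Icc a b)) := ⟨by simpa using hab⟩
  have : NeZero (volume.restrict (Icc c d)) := ⟨by simpa using hcd⟩
  have hprod : volume.restrict (Icc a b ×ˢ Icc c d) =
      (volume.restrict (Icc a b)).prod (volume.restrict (Icc c d)) := by
    rw [Measure.prod_restrict, Measure.volume_eq_prod]
  simp only [← setAverage_Icc_eq hab.le, ← setAverage_Icc_eq hcd.le, hprod] at hL2 hzero ⊢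
  exact orthogonal_average_decomposition hL2 hzero
end
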